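/- Let q be a prime power and let M be a simple and cosimple GF(q)-representable matroid that has two distinct loose elements. Then r(M) ≤ 2q. -/

import Mathlib

/-! Choose a base `B` avoiding `e` and `f` (possible since `{e, f}` is coindependent) and write
`e` and `f` in coordinates with respect to `B`. A dependent set made of elements of `B` together
with `e` or `f` contains a circuit through `e` or `f`, so looseness forces both coordinate vectors
to have at least `r - 1` nonzero entries; they therefore share at least `r - 2` positions. If
`r > 2q`, some ratio `λ ≠ 0` of the coordinates of `f` to those of `e` occurs at three common
positions, so `f - λ e` is a combination of at most `r - 3` elements of `B`, giving a circuit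
through `e` or `f` with at most `r - 1` elements. -/

namespace LoosePaper

open Set
open scoped Matroid

variable {α β : Type*}

/-- A circuit of a matroid: a minimal dependent set. -/
def Circuit (M : Matroid α) (C : Set α) : Prop :=
  M.Dep C ∧ ∀ D, M.Dep D → D ⊆ C → D = C

/-- The rank of a matroid: the (common) cardinality of its bases. -/
noncomputable def rank (M : Matroid α) : ℕ :=
  sInf {n | ∃ B, M.IsBase B ∧ B.ncard = n}

/-- An element is loose if every circuit containing it has size at least the rank. -/
def Loose (M : Matroid α) (e : α) : Prop :=
  e ∈ M.E ∧ ∀ C, Circuit M C → e ∈ C → rank M ≤ C.ncard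

/-- An element is free if every circuit containing it is spanning. -/
def FreeElt (M : Matroid α) (e : α) : Prop :=
  e ∈ M.E ∧ ∀ C, Circuit M C → e ∈ C → M.closure C = M.E

/-- A coloop: an element contained in every base. -/
def Coloop (M : Matroid α) (e : α) : Prop :=
  e ∈ M.E ∧ ∀ B, M.IsBase B → e ∈ B

def NoColoops (M : Matroid α) : Prop := ∀ e, ¬ Coloop M e

/-- A matroid is simple if every pair of its elements is independent. -/
def Simple (M : Matroid α) : Prop :=
  ∀ e ∈ M.E, ∀ f ∈ M.E, M.Indep {e, f}

/-- A matroid is paving if every circuit has size at least the rank. -/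
def Paving (M : Matroid α) : Prop :=
  ∀ C, Circuit M C → rank M ≤ C.ncard

/-- `M` is representable over the field `F`. -/
def Representable (M : Matroid α) (F : Type*) [Field F] : Prop :=
  ∃ (ι : Type) (v : α → ι → F),
    ∀ I, I ⊆ M.E → (M.Indep I ↔ LinearIndependent F (fun x : I => v x.1))

/-- `N` is the vector matroid, on ground set all of `η`, of the matrix whose
column labelled by `c : η` is `A c`. -/
def IsVectorMatroidOn (F : Type*) [Field F] {η ι : Type*} (A : η → ι → F)
    (N : Matroid η) : Prop :=
  N.E = Set.univ ∧ ∀ I : Set η, (N.Indep I ↔ LinearIndependent F (fun x : I => A x.1))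

/-- `φ` is an isomorphism from `M` to `N`. -/
def IsIsoTo (M : Matroid α) (N : Matroid β) (φ : α → β) : Prop :=
  Set.BijOn φ M.E N.E ∧ ∀ I, I ⊆ M.E → (M.Indep I ↔ N.Indep (φ '' I))

/-- The matrix `[I_r | D]` of the matroid `M_r`; the column `Sum.inl i` is the
`i`-th standard basis vector, the column `Sum.inr 0` (the distinguished element `z`)
is the all-ones vector, and for `1 ≤ j ≤ r-1` the column `Sum.inr j` has ones
exactly in rows `0` and `j` (`0`-indexed). -/
def MrMatrix (r : ℕ) : (Fin r ⊕ Fin r) → Fin r → ZMod 2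
  | Sum.inl i => fun k => if k = i then 1 else 0
  | Sum.inr j => fun k =>
      if j.val = 0 then 1 else if k.val = 0 ∨ k = j then 1 else 0

/-- The matrix `[I_r | D]` of the matroid `N_r`; the column `Sum.inr 0`
(the distinguished element `z`) is `(0,1,…,1)ᵀ`, and for `1 ≤ j ≤ r-2` the column
`Sum.inr j` has ones exactly in rows `0`, `1` and `j+1` (`0`-indexed). -/
def NrMatrix (r : ℕ) : (Fin r ⊕ Fin (r - 1)) → Fin r → ZMod 2
  | Sum.inl i => fun k => if k = i then 1 else 0
  | Sum.inr j => fun k =>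
      if j.val = 0 then (if k.val = 0 then 0 else 1)
      else if k.val = 0 ∨ k.val = 1 ∨ k.val = j.val + 1 then 1 else 0

/-- The matrix `[I_r | D]` of the matroid `L_r`; the columns of `D` are the all-ones
vector, `(1,1,0,…,0)ᵀ`, `(1,0,1,0,…,0)ᵀ` and `(0,1,1,0,…,0)ᵀ`. -/
def LrMatrix (r : ℕ) : (Fin r ⊕ Fin 4) → Fin r → ZMod 2
  | Sum.inl i => fun k => if k = i then 1 else 0
  | Sum.inr j => fun k =>
      if j = 0 then 1
      else if j = 1 then (if k.val = 0 ∨ k.val = 1 then 1 else 0)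
      else if j = 2 then (if k.val = 0 ∨ k.val = 2 then 1 else 0)
      else if k.val = 1 ∨ k.val = 2 then 1 else 0

/-- The matrix `[I_r | D]` of the matroid `J_r`; the columns of `D` are
`(0,1,1,…,1)ᵀ`, `(1,1,1,0,…,0)ᵀ`, `(1,1,0,1,0,…,0)ᵀ` and `(1,0,1,1,0,…,0)ᵀ`. -/
def JrMatrix (r : ℕ) : (Fin r ⊕ Fin 4) → Fin r → ZMod 2
  | Sum.inl i => fun k => if k = i then 1 else 0
  | Sum.inr j => fun k =>
      if j = 0 then (if k.val = 0 then 0 else 1)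
      else if j = 1 then (if k.val = 0 ∨ k.val = 1 ∨ k.val = 2 then 1 else 0)
      else if j = 2 then (if k.val = 0 ∨ k.val = 1 ∨ k.val = 3 then 1 else 0)
      else if k.val = 0 ∨ k.val = 2 ∨ k.val = 3 then 1 else 0

/-- A matrix over `GF(3)` whose vector matroid is `U_{2,4}`. -/
def U24Matrix : Fin 4 → Fin 2 → ZMod 3
  | 0 => fun k => if k = 0 then 1 else 0
  | 1 => fun k => if k = 1 then 1 else 0
  | 2 => fun _ => 1
  | 3 => fun k => if k = 0 then 1 else 2

/-- A `GF(3)`-matrix representing the matroid obtained from a circuit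
`{e, c_0, …, c_{n-1}}` (where `e` is the element `Sum.inl ()`) by 2-summing a copy
of `U_{2,4}` across each element `c_d` with `d ∈ D`.  For `d ∉ D` the element
`Sum.inr (d, 0)` is `c_d`, and for `d ∈ D` the elements `Sum.inr (d, j)`,
`j = 0, 1, 2`, are the three elements of the copy of `U_{2,4}` other than its
basepoint. -/
def thetaMatrix (n : ℕ) (D : Finset (Fin n)) :
    (Unit ⊕ Fin n × Fin 3) → (Fin n ⊕ Fin n) → ZMod 3
  | Sum.inl _ => fun row => Sum.elim (fun _ => 1) (fun _ => 0) row
  | Sum.inr (d, j) => fun row =>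
      let ed : (Fin n ⊕ Fin n) → ZMod 3 :=
        Sum.elim (fun i => if i = d then 1 else 0) (fun _ => 0)
      let wd : (Fin n ⊕ Fin n) → ZMod 3 :=
        Sum.elim (fun _ => 0) (fun i => if i = d then 1 else 0)
      if d ∈ D then
        (if j = 0 then wd row else if j = 1 then ed row + wd row else ed row - wd row)
      else ed row

/-- The ground set of the 2-sum construction: the circuit element `e`, the
untouched circuit elements `c_d` for `d ∉ D`, and three `U_{2,4}`-elements for
each `d ∈ D`. -/
def thetaGround (n : ℕ) (D : Finset (Fin n)) : Set (Unit ⊕ Fin n × Fin 3) :=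
  {x | ∀ d : Fin n, ∀ j : Fin 3, x = Sum.inr (d, j) → (j = 0 ∨ d ∈ D)}

open Finset in
theorem exists_card_support_sub_smul_add_lt {F : Type*} [DivisionRing F] [Fintype F]
    [DecidableEq α] (x y : α →₀ F) {k : ℕ}
    (h : (Fintype.card F - 1) * k < #(x.support ∩ y.support)) :
    ∃ c : F, #(y - c • x).support + k < #(x.support ∪ y.support) := by
  classical
  have hmaps : ∀ b ∈ x.support ∩ y.support, y b / x b ∈ univ.erase (0 : F) := fun b hb => by
    simp only [Finsupp.mem_support_iff, Finset.mem_inter] at hb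
    simpa using div_ne_zero hb.2 hb.1
  obtain ⟨c, -, hc⟩ := exists_lt_card_fiber_of_mul_lt_card_of_maps_to hmaps
    (by rwa [card_erase_of_mem (mem_univ _), card_univ])
  set T := (x.support ∩ y.support).filter (fun b => y b / x b = c)
  have hT : T ⊆ x.support ∪ y.support := fun b hb =>
    Finset.mem_union_left _ (Finset.mem_inter.1 (mem_filter.1 hb).1).1
  have hsupp : (y - c • x).support ⊆ (x.support ∪ y.support) \ T := by
    intro b hb
    simp only [Finset.mem_sdiff, Finset.mem_union, Finsupp.mem_support_iff, ne_eq] at hb ⊢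
    refine ⟨?_, fun hbT => hb ?_⟩
    · by_contra! h0
      simp [h0] at hb
    · obtain ⟨hbS, hbc⟩ := mem_filter.1 hbT
      have hx : x b ≠ 0 := Finsupp.mem_support_iff.1 (Finset.mem_inter.1 hbS).1
      simp [← hbc, div_mul_cancel₀ _ hx]
  have h1 := Finset.card_le_card hsupp
  have h2 := Finset.card_le_card hT
  rw [card_sdiff_of_subset hT] at h1
  exact ⟨c, by omega⟩

variable {M : Matroid α} {B C I K S X : Set α} {a e f : α}

theorem circuit_iff_isCircuit : Circuit M C ↔ M.IsCircuit C :=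
  ⟨fun h => ⟨h.1, fun D hD hDC => (h.2 D hD hDC).symm.le⟩,
    fun h => ⟨h.dep, fun _ hD hDC => h.eq_of_subset hD hDC⟩⟩

theorem rank_eq_ncard_of_isBase (hB : M.IsBase B) : rank M = B.ncard := by
  refine le_antisymm (Nat.sInf_le ⟨B, hB, rfl⟩) (le_csInf ⟨B.ncard, B, hB, rfl⟩ ?_)
  rintro n ⟨B', hB', rfl⟩
  exact (hB.ncard_eq_ncard_of_isBase hB').le

theorem rank_le_ncard_of_dep (hK : ∀ x ∈ K, Loose M x) (hXfin : X.Finite) (hX : M.Dep X)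
    (hXK : M.Indep (X \ K)) : rank M ≤ X.ncard := by
  obtain ⟨C, hCX, hC⟩ := hX.exists_isCircuit_subset
  obtain ⟨x, hxC, hxK⟩ : ∃ x ∈ C, x ∈ K := by
    by_contra! h
    exact hC.not_indep (hXK.subset fun x hx => ⟨hCX hx, h x hx⟩)
  exact ((hK x hxK).2 C (circuit_iff_isCircuit.2 hC) hxC).trans (ncard_le_ncard hCX hXfin)

def IsRepresentation (M : Matroid α) (F : Type*) {V : Type*} [Field F] [AddCommGroup V]
    [Module F V] (v : α → V) : Prop :=
  ∀ I ⊆ M.E, M.Indep I ↔ LinearIndepOn F v I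

section Representation

variable {F V : Type*} [Field F] [AddCommGroup V] [Module F V] {v : α → V}

theorem IsRepresentation.dep_insert_of_mem_span (hv : IsRepresentation M F v) (haE : a ∈ M.E)
    (hSE : S ⊆ M.E) (haS : a ∉ S) (hspan : v a ∈ Submodule.span F (v '' S)) :
    M.Dep (insert a S) :=
  ⟨fun hind => ((linearIndepOn_insert haS).1 ((hv _ (insert_subset haE hSE)).1 hind)).2 hspan,
    insert_subset haE hSE⟩

theorem IsRepresentation.mem_span_of_isBase (hv : IsRepresentation M F v) (hB : M.IsBase B)
    (ha : a ∈ M.E) : v a ∈ Submodule.span F (v '' B) := by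
  by_cases haB : a ∈ B
  · exact Submodule.subset_span (mem_image_of_mem v haB)
  by_contra h
  refine (hB.insert_dep ⟨ha, haB⟩).not_indep ((hv _ (insert_subset ha hB.subset_ground)).2 ?_)
  exact (linearIndepOn_insert haB).2 ⟨(hv B hB.subset_ground).1 hB.indep, h⟩

theorem IsRepresentation.rank_le_ncard_add_one (hv : IsRepresentation M F v)
    (hK : ∀ x ∈ K, Loose M x) (haK : a ∈ K) (hSfin : S.Finite) (hSE : S ⊆ M.E) (haS : a ∉ S)
    (hSK : M.Indep (S \ K)) (hspan : v a ∈ Submodule.span F (v '' S)) :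
    rank M ≤ S.ncard + 1 := by
  have hdep := hv.dep_insert_of_mem_span (hK a haK).1 hSE haS hspan
  have hind : M.Indep (insert a S \ K) :=
    hSK.subset fun x ⟨hx, hxK⟩ => ⟨hx.resolve_left (by rintro rfl; exact hxK haK), hxK⟩
  rw [← ncard_insert_of_notMem haS hSfin]
  exact rank_le_ncard_of_dep hK (hSfin.insert a) hdep hind

theorem linearCombination_mem_span_image_support (l : α →₀ F) :
    Finsupp.linearCombination F v l ∈ Submodule.span F (v '' l.support) :=
  (Finsupp.mem_span_image_iff_linearCombination F).2
    ⟨l, (Finsupp.mem_supported F l).2 subset_rfl, rfl⟩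

theorem IsRepresentation.rank_le_card_support_add_one (hv : IsRepresentation M F v)
    (hI : M.Indep I) (ha : Loose M a) (haI : a ∉ I) {l : α →₀ F} (hlI : ↑l.support ⊆ I)
    (hl : Finsupp.linearCombination F v l = v a) : rank M ≤ l.support.card + 1 := by
  rw [← ncard_coe_finset]
  refine hv.rank_le_ncard_add_one (K := {a}) (by simpa using ha) rfl l.support.finite_toSet
    (hlI.trans hI.subset_ground) (fun h => haI (hlI h)) (hI.subset (sdiff_subset.trans hlI)) ?_
  exact hl ▸ linearCombination_mem_span_image_support l

theorem IsRepresentation.rank_le_card_support_add_two (hv : IsRepresentation M F v)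
    (hI : M.Indep I) (he : Loose M e) (hf : Loose M f) (hef : e ≠ f) (hfI : f ∉ I)
    {l : α →₀ F} (hlI : ↑l.support ⊆ I) (c : F)
    (hl : Finsupp.linearCombination F v l + c • v e = v f) : rank M ≤ l.support.card + 2 := by
  set S := insert e (l.support : Set α)
  have hspan : v f ∈ Submodule.span F (v '' S) := hl ▸ add_mem
    (Submodule.span_mono (image_mono (subset_insert _ _))
      (linearCombination_mem_span_image_support l))
    (Submodule.smul_mem _ c (Submodule.subset_span (mem_image_of_mem v (mem_insert e _))))
  have hfS : f ∉ S := by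
    rintro (h | h)
    exacts [hef h.symm, hfI (hlI h)]
  have hSK : S \ {e, f} ⊆ I := fun x ⟨hx, hxef⟩ =>
    hlI (hx.resolve_left fun h => hxef (Or.inl h))
  have := hv.rank_le_ncard_add_one (K := {e, f}) (by simp [he, hf]) (by simp)
    (l.support.finite_toSet.insert e) (insert_subset he.1 (hlI.trans hI.subset_ground)) hfS
    (hI.subset hSK) hspan
  have := ncard_insert_le e (l.support : Set α)
  rw [ncard_coe_finset] at this
  omega

end Representation

theorem cosimple_two_loose_general {α : Type*} (q : ℕ) (F : Type) [Field F] [Fintype F]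
    (hq : Fintype.card F = q) (M : Matroid α)
    (hcosimple : Simple M.dual) (hrep : Representable M F)
    (e f : α) (hef : e ≠ f) (he : Loose M e) (hf : Loose M f) :
    rank M ≤ 2 * q := by
  classical
  obtain ⟨ι, v, hv⟩ := hrep
  replace hv : IsRepresentation M F v := hv
  obtain ⟨-, B, hB, hdisj⟩ := Matroid.dual_indep_iff_exists'.1 (hcosimple e he.1 f hf.1)
  have heB : e ∉ B := disjoint_left.1 hdisj (mem_insert e _)
  have hfB : f ∉ B := disjoint_left.1 hdisj (mem_insert_of_mem e rfl)
  have hrB := rank_eq_ncard_of_isBase hB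
  by_contra! hr
  have hBfin : B.Finite := finite_of_ncard_pos (by omega)
  obtain ⟨le, hleB, hle⟩ := (Finsupp.mem_span_image_iff_linearCombination F).1
    (hv.mem_span_of_isBase hB he.1)
  obtain ⟨lf, hlfB, hlf⟩ := (Finsupp.mem_span_image_iff_linearCombination F).1
    (hv.mem_span_of_isBase hB hf.1)
  rw [Finsupp.mem_supported] at hleB hlfB
  have hle_card := hv.rank_le_card_support_add_one hB.indep he heB hleB hle
  have hlf_card := hv.rank_le_card_support_add_one hB.indep hf hfB hlfB hlf
  have hunion : (le.support ∪ lf.support).card ≤ B.ncard := by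
    rw [← ncard_coe_finset, Finset.coe_union]
    exact ncard_le_ncard (union_subset hleB hlfB) hBfin
  have := Finset.card_union_add_card_inter le.support lf.support
  obtain ⟨c, hc⟩ := exists_card_support_sub_smul_add_lt le lf (k := 2)
    (by have := Fintype.card_pos (α := F); omega)
  have hsupp : ↑(lf - c • le).support ⊆ B := fun x hx => by
    rcases Finset.mem_union.1 (Finsupp.support_sub hx) with h | h
    exacts [hlfB h, hleB (Finsupp.support_smul h)]
  have := hv.rank_le_card_support_add_two hB.indep he hf hef hfB hsupp c (by simp [hle, hlf])
  omega

/-- Corollary 4.2: a simple and cosimple `GF(q)`-representable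
matroid with two distinct loose elements has rank at most `2q`. -/
theorem cosimple_two_loose {α : Type*} (q : ℕ) (F : Type) [Field F] [Fintype F]
    (hq : Fintype.card F = q) (M : Matroid α) (hsimple : Simple M)
    (hcosimple : Simple M.dual) (hrep : Representable M F)
    (e f : α) (hef : e ≠ f) (he : Loose M e) (hf : Loose M f) :
    rank M ≤ 2 * q :=
  cosimple_two_loose_general q F hq M hcosimple hrep e f hef he hf

end LoosePaper
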